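/- Fix k ≥ 1 and let (Q_m)_{0 ≤ m ≤ k−1} be a dual Hermite family for H_k. Then for every 0 ≤ m ≤ k − 1: Σ_{x ∈ roots(H_k)} Q_m(x)² = k·(k−1)·⋯·(k−m), i.e. the descending factorial product of m + 1 factors starting at k (equivalently k!/(k−m−1)!). -/

import Mathlib

noncomputable def hermiteR (k : ℕ) : Polynomial ℝ :=
  (Polynomial.hermite k).map (Int.castRingHom ℝ)

/-- A dual Hermite family for `H_k`: real polynomials `Q_0, …, Q_{k-1}` with `Q_m` monic of
degree `m`, orthogonal for the counting measure on the `k` distinct real roots of `H_k`. -/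
def IsDualHermiteFamily (k : ℕ) (Q : ℕ → Polynomial ℝ) : Prop :=
  (∀ m < k, (Q m).Monic ∧ (Q m).natDegree = m) ∧
  ∀ m < k, ∀ n < k, m ≠ n →
    ((hermiteR k).roots.map (fun x => (Q m).eval x * (Q n).eval x)).sum = 0

/-!
Write `T g` for the sum of `g` over the roots of `H_k`. Evaluating the Christoffel–Darboux
identity for Hermite polynomials at `z` and `z̄` shows that every complex root of `H_k` is real,
so `H_k` splits over `ℝ`. For a split monic `p`, the sum of `g` over the roots of `p` is the
coefficient of `X ^ (deg p - 1)` in `g p' mod p`; here `H_k' = k H_{k-1}`. The polynomials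
`P_{m+2} = X P_{m+1} - (k - 1 - m) P_m` satisfy
`H_{k-1} P_m ≡ (k-1)⋯(k-m) H_{k-1-m} (mod H_k)`, hence `T (f P_m) = k (k-1)⋯(k-m) · [X^m] f`
whenever `deg f ≤ m`. Finally `Q_m` is orthogonal to every polynomial of degree `< m`, since these
are spanned by `Q_0, …, Q_{m-1}`, and `Q_m - P_m` is such a polynomial, so
`T (Q_m ^ 2) = T (Q_m P_m) = k (k-1)⋯(k-m)`.
-/

open Polynomial

namespace Polynomial

theorem derivative_hermite_succ (n : ℕ) :
    derivative (hermite (n + 1)) = ((n : ℤ[X]) + 1) * hermite n := by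
  induction n with
  | zero => simp
  | succ n ih =>
    rw [hermite_succ (n + 1), derivative_sub, derivative_mul, ih, derivative_mul, hermite_succ n]
    simp only [derivative_X, derivative_add, derivative_natCast, derivative_one, Nat.cast_add,
      Nat.cast_one, one_mul, add_zero, zero_mul, zero_add]
    ring

theorem hermite_succ_succ (n : ℕ) :
    hermite (n + 2) = X * hermite (n + 1) - ((n : ℤ[X]) + 1) * hermite n := by
  rw [hermite_succ (n + 1), derivative_hermite_succ]

theorem aeval_hermite_succ_succ {A : Type*} [CommRing A] (x : A) (n : ℕ) :
    aeval x (hermite (n + 2)) = x * aeval x (hermite (n + 1)) - (n + 1) * aeval x (hermite n) := by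
  rw [hermite_succ_succ]
  simp

open Nat in
theorem hermite_christoffel_darboux {K : Type*} [Field K] [CharZero K] (n : ℕ) (x y : K) :
    (x - y) * ∑ j ∈ Finset.range (n + 1), aeval x (hermite j) * aeval y (hermite j) / j ! =
      (aeval x (hermite (n + 1)) * aeval y (hermite n)
        - aeval x (hermite n) * aeval y (hermite (n + 1))) / n ! := by
  induction n with
  | zero => simp
  | succ n ih =>
    rw [Finset.sum_range_succ, mul_add, ih, aeval_hermite_succ_succ, aeval_hermite_succ_succ]
    push_cast [factorial_succ]
    field_simp
    ring

open ComplexConjugate in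
theorem im_eq_zero_of_aeval_hermite_eq_zero {k : ℕ} {z : ℂ} (hz : aeval z (hermite k) = 0) :
    z.im = 0 := by
  obtain _ | n := k
  · simp at hz
  have hconj (j : ℕ) : aeval (conj z) (hermite j) = conj (aeval z (hermite j)) :=
    aeval_algHom_apply (starRingEnd ℂ).toIntAlgHom z _
  have hpos :
      0 < ∑ j ∈ Finset.range (n + 1), Complex.normSq (aeval z (hermite j)) / j.factorial :=
    Finset.sum_pos' (fun j _ => div_nonneg (Complex.normSq_nonneg _) (by positivity))
      ⟨0, by simp⟩
  have h := hermite_christoffel_darboux n z (conj z)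
  simp only [hconj, hz, map_zero, zero_mul, mul_zero, sub_zero, zero_div, Complex.mul_conj] at h
  rw [← Complex.conj_eq_iff_im, eq_comm, ← sub_eq_zero]
  refine (mul_eq_zero.1 h).resolve_right ?_
  exact_mod_cast hpos.ne'

end Polynomial

theorem hermiteR_monic (n : ℕ) : (hermiteR n).Monic :=
  (hermite_monic n).map _

theorem natDegree_hermiteR (n : ℕ) : (hermiteR n).natDegree = n := by
  rw [hermiteR, (hermite_monic n).natDegree_map, natDegree_hermite]

theorem derivative_hermiteR_succ (n : ℕ) :
    derivative (hermiteR (n + 1)) = ((n : ℝ[X]) + 1) * hermiteR n := by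
  rw [hermiteR, derivative_map, derivative_hermite_succ, Polynomial.map_mul, Polynomial.map_add,
    Polynomial.map_natCast, Polynomial.map_one]
  rfl

theorem hermiteR_succ_succ (n : ℕ) :
    hermiteR (n + 2) = X * hermiteR (n + 1) - ((n : ℝ[X]) + 1) * hermiteR n := by
  rw [hermiteR, hermite_succ_succ, Polynomial.map_sub, Polynomial.map_mul, Polynomial.map_mul,
    map_X, Polynomial.map_add, Polynomial.map_natCast, Polynomial.map_one]
  rfl

theorem coeff_hermiteR_self (n : ℕ) : (hermiteR n).coeff n = 1 := by
  simpa [natDegree_hermiteR] using (hermiteR_monic n).coeff_natDegree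

theorem hermiteR_splits (k : ℕ) : (hermiteR k).Splits := by
  refine Splits.of_splits_map_of_injective (i := Complex.ofRealHom) Complex.ofReal_injective
    (IsAlgClosed.splits _) fun a ha => ⟨a.re, Complex.ext rfl ?_⟩
  rw [mem_roots', IsRoot, hermiteR, Polynomial.map_map] at ha
  have : aeval a (hermite k) = 0 := by
    rw [RingHom.ext_int (Complex.ofRealHom.comp _) (algebraMap ℤ ℂ), eval_map_algebraMap] at ha
    exact ha.2
  simp [im_eq_zero_of_aeval_hermite_eq_zero this]

theorem Polynomial.sum_roots_eval_eq_coeff_modByMonic {F : Type*} [Field F] {p : F[X]}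
    (hp : p.Monic) (hs : p.Splits) (g : F[X]) :
    (p.roots.map fun x => g.eval x).sum = ((g * derivative p) %ₘ p).coeff (p.natDegree - 1) := by
  classical
  set s := p.roots
  set e : F → F[X] := fun x => ((s.erase x).map fun a => X - C a).prod
  have hprod : (s.map fun a => X - C a).prod = p := (hs.eq_prod_roots_of_monic hp).symm
  have he_monic (x : F) : (e x).Monic :=
    monic_multiset_prod_of_monic _ _ fun a _ => monic_X_sub_C a
  have he_natDegree {x : F} (hx : x ∈ s) : (e x).natDegree = p.natDegree - 1 := by
    rw [natDegree_multiset_prod_X_sub_C_eq_card, Multiset.card_erase_of_mem hx,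
      hs.natDegree_eq_card_roots, Nat.pred_eq_sub_one]
  -- `p' = Σ e x`, and `g * e x ≡ g(x) * e x (mod p)` because `p = (X - C x) * e x`.
  set r := (s.map fun x => C (g.eval x) * e x).sum
  have hdvd : p ∣ g * derivative p - r := by
    rw [← hprod, derivative_prod, ← Multiset.sum_map_mul_left, ← Multiset.sum_map_sub]
    refine Multiset.dvd_sum fun _ hy => ?_
    obtain ⟨x, hx, rfl⟩ := Multiset.mem_map.1 hy
    rw [derivative_sub, derivative_X, derivative_C, sub_zero, mul_one, ← sub_mul,
      ← Multiset.prod_map_erase hx]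
    exact mul_dvd_mul X_sub_C_dvd_sub_C_eval dvd_rfl
  have hr_mem : r ∈ degreeLT F p.natDegree := by
    refine multiset_sum_mem _ fun _ hy => ?_
    obtain ⟨x, hx, rfl⟩ := Multiset.mem_map.1 hy
    have : 0 < p.natDegree := by
      rw [hs.natDegree_eq_card_roots]; exact Multiset.card_pos_iff_exists_mem.2 ⟨x, hx⟩
    rw [← smul_eq_C_mul]
    refine Submodule.smul_mem _ _ (mem_degreeLT.2 ?_)
    rw [degree_eq_natDegree (he_monic x).ne_zero, he_natDegree hx]
    exact_mod_cast Nat.sub_lt this one_pos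
  have hmod : (g * derivative p) %ₘ p = r := by
    rw [modByMonic_eq_of_dvd_sub hp hdvd, (modByMonic_eq_self_iff hp).2]
    rwa [mem_degreeLT, ← degree_eq_natDegree hp.ne_zero] at hr_mem
  rw [hmod, ← lcoeff_apply, map_multiset_sum, Multiset.map_map]
  refine congrArg _ (Multiset.map_congr rfl fun x hx => ?_)
  simp only [Function.comp_apply, lcoeff_apply, coeff_C_mul, ← he_natDegree hx,
    (he_monic x).coeff_natDegree, mul_one]

noncomputable def countingForm {R : Type*} [CommRing R] (s : Multiset R) :
    LinearMap.BilinForm R R[X] :=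
  LinearMap.mk₂ R (fun f g => (s.map fun x => f.eval x * g.eval x).sum)
    (fun f₁ f₂ g => by simp [add_mul, Multiset.sum_map_add])
    (fun c f g => by simp [mul_assoc, Multiset.sum_map_mul_left])
    (fun f g₁ g₂ => by simp [mul_add, Multiset.sum_map_add])
    (fun c f g => by simp [mul_left_comm, Multiset.sum_map_mul_left])

theorem countingForm_apply {R : Type*} [CommRing R] (s : Multiset R) (f g : R[X]) :
    countingForm s f g = (s.map fun x => f.eval x * g.eval x).sum :=
  rfl

theorem Polynomial.span_image_Iio_eq_degreeLT {R : Type*} [CommRing R] [Nontrivial R]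
    {Q : ℕ → R[X]} {m : ℕ} (hQ : ∀ j < m, IsMonicOfDegree (Q j) j) :
    Submodule.span R (Q '' Set.Iio m) = degreeLT R m := by
  classical
  let S : Sequence R := ⟨fun j => if j < m then Q j else X ^ j, fun j => by
    split_ifs with hj
    · rw [degree_eq_natDegree (hQ j hj).ne_zero, (hQ j hj).natDegree_eq]
    · exact degree_X_pow j⟩
  have hS : S '' Set.Iio m = Q '' Set.Iio m := Set.image_congr fun j hj => if_pos hj
  rw [← hS, S.span_degreeLT fun j hj => ?_]
  simp only [S, if_pos hj, (hQ j hj).leadingCoeff_eq, isUnit_one]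

theorem Polynomial.degreeLT_le_ker {R M : Type*} [CommRing R] [Nontrivial R] [AddCommMonoid M]
    [Module R M] {Q : ℕ → R[X]} {m : ℕ} (hQ : ∀ j < m, IsMonicOfDegree (Q j) j)
    {L : R[X] →ₗ[R] M} (hL : ∀ j < m, L (Q j) = 0) : degreeLT R m ≤ LinearMap.ker L := by
  rw [← span_image_Iio_eq_degreeLT hQ, Submodule.span_le]
  rintro _ ⟨j, hj, rfl⟩
  exact hL j hj

theorem Polynomial.IsMonicOfDegree.sub_mem_degreeLT {R : Type*} [CommRing R] [Nontrivial R]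
    {p q : R[X]} {n : ℕ} (hp : IsMonicOfDegree p n) (hq : IsMonicOfDegree q n) :
    p - q ∈ degreeLT R n := by
  have hdeg : p.degree = n := by rw [degree_eq_natDegree hp.ne_zero, hp.natDegree_eq]
  rw [mem_degreeLT, ← hdeg]
  refine degree_sub_lt_left ?_ hp.ne_zero (by rw [hp.leadingCoeff_eq, hq.leadingCoeff_eq])
  rw [hdeg, degree_eq_natDegree hq.ne_zero, hq.natDegree_eq]

-- The dual family of `H_{n+1}`: indexing by `n = k - 1` keeps the recursion free of truncated
-- subtraction.
noncomputable def dualHermite (n : ℕ) : ℕ → ℝ[X]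
  | 0 => 1
  | 1 => X
  | m + 2 => X * dualHermite n (m + 1) - C ((n : ℝ) - m) * dualHermite n m

theorem isMonicOfDegree_dualHermite (n : ℕ) : ∀ m, IsMonicOfDegree (dualHermite n m) m
  | 0 => isMonicOfDegree_zero_iff.2 rfl
  | 1 => isMonicOfDegree_X ℝ
  | m + 2 => by
    have hlt : (C ((n : ℝ) - m) * dualHermite n m).natDegree < 1 + (m + 1) :=
      (natDegree_C_mul_le _ _).trans_lt <| by
        rw [(isMonicOfDegree_dualHermite n m).natDegree_eq]; omega
    have h := ((isMonicOfDegree_X ℝ).mul (isMonicOfDegree_dualHermite n (m + 1))).sub hlt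
    rw [dualHermite]
    rwa [show 1 + (m + 1) = m + 2 by omega] at h

theorem hermiteR_succ_dvd_hermiteR_mul_dualHermite_sub {n : ℕ} : ∀ {m j : ℕ}, m + j = n →
    hermiteR (n + 1) ∣ hermiteR n * dualHermite n m - (n.descFactorial m : ℝ[X]) * hermiteR j
  | 0, j, h => by simp [dualHermite, ← h]
  | 1, j, h => by
    obtain rfl : n = j + 1 := by omega
    refine dvd_of_eq ?_
    rw [hermiteR_succ_succ, dualHermite, Nat.descFactorial_one]
    push_cast
    ring
  | m + 2, j, h => by
    have h₁ := hermiteR_succ_dvd_hermiteR_mul_dualHermite_sub (n := n) (m := m + 1) (j := j + 1)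
      (by omega)
    have h₀ := hermiteR_succ_dvd_hermiteR_mul_dualHermite_sub (n := n) (m := m) (j := j + 2)
      (by omega)
    have hfac₁ : n.descFactorial (m + 1) = (j + 2) * n.descFactorial m := by
      rw [Nat.descFactorial_succ]; congr 1; omega
    have hfac₂ : n.descFactorial (m + 2) = (j + 1) * n.descFactorial (m + 1) := by
      rw [Nat.descFactorial_succ]; congr 1; omega
    have hcoeff : (n : ℝ) - m = j + 2 := by
      rw [sub_eq_iff_eq_add]; norm_cast; omega
    have key : hermiteR n * dualHermite n (m + 2) - (n.descFactorial (m + 2) : ℝ[X]) * hermiteR j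
        = X * (hermiteR n * dualHermite n (m + 1)
            - (n.descFactorial (m + 1) : ℝ[X]) * hermiteR (j + 1))
          - ((j : ℝ[X]) + 2) * (hermiteR n * dualHermite n m
            - (n.descFactorial m : ℝ[X]) * hermiteR (j + 2)) := by
      rw [dualHermite, hcoeff, hermiteR_succ_succ j, hfac₂, hfac₁]
      simp only [map_add, map_natCast, map_ofNat]
      push_cast
      ring
    rw [key]
    exact (h₁.mul_left X).sub (h₀.mul_left _)

theorem countingForm_roots_hermiteR_dualHermite {m j : ℕ} {f : ℝ[X]} (hf : f.natDegree ≤ m) :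
    countingForm (hermiteR (m + j + 1)).roots f (dualHermite (m + j) m) =
      ((m + j + 1).descFactorial (m + 1) : ℝ) * f.coeff m := by
  set a : ℝ := ↑((m + j + 1).descFactorial (m + 1))
  have ha : C a = ((m + j : ℕ) + 1 : ℝ[X]) * ((m + j).descFactorial m : ℝ[X]) := by
    simp only [a, Nat.succ_descFactorial_succ, Nat.cast_mul, map_mul, map_natCast]
    push_cast
    ring
  have hdvd : hermiteR (m + j + 1) ∣
      f * dualHermite (m + j) m * (((m + j : ℕ) + 1 : ℝ[X]) * hermiteR (m + j))
        - C a * (f * hermiteR j) := by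
    rw [ha]
    refine (hermiteR_succ_dvd_hermiteR_mul_dualHermite_sub rfl).trans
      (Dvd.intro (((m + j : ℕ) + 1) * f) ?_)
    ring
  have hdeg : (C a * (f * hermiteR j)).natDegree < (hermiteR (m + j + 1)).natDegree := by
    refine (natDegree_C_mul_le _ _).trans_lt ((natDegree_mul_le).trans_lt ?_)
    rw [natDegree_hermiteR, natDegree_hermiteR]
    omega
  simp_rw [countingForm_apply, ← eval_mul]
  rw [sum_roots_eval_eq_coeff_modByMonic (hermiteR_monic _) (hermiteR_splits _),
    derivative_hermiteR_succ, modByMonic_eq_of_dvd_sub (hermiteR_monic _) hdvd,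
    (modByMonic_eq_self_iff (hermiteR_monic _)).2 (degree_lt_degree hdeg), natDegree_hermiteR,
    Nat.add_sub_cancel, coeff_C_mul, coeff_mul_add_eq_of_natDegree_le hf (natDegree_hermiteR j).le,
    coeff_hermiteR_self, mul_one]

theorem stmt8_general (k : ℕ) (Q : ℕ → Polynomial ℝ)
    (hQ : IsDualHermiteFamily k Q) (m : ℕ) (hm : m ≤ k - 1) :
    ((hermiteR k).roots.map (fun x => (Q m).eval x ^ 2)).sum
      = (k.descFactorial (m + 1) : ℝ) := by
  obtain _ | n := k
  · simp [hermiteR]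
  obtain ⟨j, rfl⟩ := Nat.exists_eq_add_of_le (show m ≤ n by omega)
  have hQ_monic (i : ℕ) (hi : i < m + j + 1) : IsMonicOfDegree (Q i) i :=
    ⟨(hQ.1 i hi).2, (hQ.1 i hi).1⟩
  have hQm := hQ_monic m (by omega)
  set B := countingForm (hermiteR (m + j + 1)).roots
  set P := dualHermite (m + j) m
  have horth : B (Q m) (Q m - P) = 0 :=
    degreeLT_le_ker (fun i hi => hQ_monic i (by omega))
      (fun i hi => hQ.2 m (by omega) i (by omega) hi.ne')
      (hQm.sub_mem_degreeLT (isMonicOfDegree_dualHermite _ m))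
  calc _ = B (Q m) (Q m) := by simp [B, countingForm_apply, sq]
    _ = B (Q m) P := by rw [← sub_eq_zero, ← map_sub, horth]
    _ = _ := by
      rw [countingForm_roots_hermiteR_dualHermite hQm.natDegree_eq.le,
        ((isMonicOfDegree_iff _ _).1 hQm).2, mul_one]

theorem stmt8 (k : ℕ) (hk : 1 ≤ k) (Q : ℕ → Polynomial ℝ)
    (hQ : IsDualHermiteFamily k Q) (m : ℕ) (hm : m ≤ k - 1) :
    ((hermiteR k).roots.map (fun x => (Q m).eval x ^ 2)).sum
      = (k.descFactorial (m + 1) : ℝ) :=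
  stmt8_general k Q hQ m hm
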